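/- Let m ≥ 2, H ≤ Sym(m), and let G be a closed subgroup of the iterated wreath product W_H such that for every vertex v of the tree, hdim_G(rist_G(v)) ≥ m^{−l(v)}, where l(v) is the level of v. Then for every k ≥ 1 the rigid level stabilizer Rist_G(k) has Hausdorff dimension 1 in G: hdim_G(Rist_G(k)) = 1. -/

import Mathlib

open Filter Topology

/-- Vertices of the `m`-adic rooted tree: finite words over an alphabet of size `m`. -/
abbrev Vtx (m : ℕ) := List (Fin m)

/-- The iterated wreath product `W_H ≤ Aut T`: permutations `f` of the vertex set that fix
the root and such that at every vertex `v` there is a local permutation `σ ∈ H` with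
`f (v ++ [x]) = f v ++ [σ x]` for every letter `x`.  (This encodes exactly the automorphisms
of the `m`-adic tree whose local permutation at every vertex lies in `H`.) -/
def wreath (m : ℕ) (H : Subgroup (Equiv.Perm (Fin m))) : Subgroup (Equiv.Perm (Vtx m)) where
  carrier := {f | f [] = [] ∧
    ∀ v : Vtx m, ∃ σ ∈ H, ∀ x : Fin m, f (v ++ [x]) = f v ++ [σ x]}
  one_mem' := ⟨rfl, fun _ => ⟨1, H.one_mem, fun _ => rfl⟩⟩
  mul_mem' := by
    rintro f g ⟨hf0, hf⟩ ⟨hg0, hg⟩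
    refine ⟨?_, fun v => ?_⟩
    · show f (g []) = []
      rw [hg0, hf0]
    · obtain ⟨τ, hτ, hτ'⟩ := hg v
      obtain ⟨σ, hσ, hσ'⟩ := hf (g v)
      refine ⟨σ * τ, H.mul_mem hσ hτ, fun x => ?_⟩
      show f (g (v ++ [x])) = f (g v) ++ [σ (τ x)]
      rw [hτ' x, hσ' (τ x)]
  inv_mem' := by
    rintro f ⟨hf0, hf⟩
    refine ⟨?_, fun v => ?_⟩
    · calc (f⁻¹ : Equiv.Perm (Vtx m)) [] = f⁻¹ (f []) := by rw [hf0]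
        _ = [] := Equiv.symm_apply_apply f []
    · obtain ⟨σ, hσ, hσ'⟩ := hf (f⁻¹ v)
      refine ⟨σ⁻¹, H.inv_mem hσ, fun x => ?_⟩
      apply Equiv.injective f
      rw [hσ' (σ⁻¹ x)]
      simp only [Equiv.Perm.inv_def, Equiv.apply_symm_apply]

/-- The pointwise stabilizer (in the full permutation group of the vertex set)
of the vertices of the first `n` levels of the tree. -/
def levelStab (m n : ℕ) : Subgroup (Equiv.Perm (Vtx m)) :=
  ⨅ v ∈ {v : Vtx m | v.length ≤ n}, MulAction.stabilizer (Equiv.Perm (Vtx m)) v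

/-- The Hausdorff dimension of `X` in `G` with respect to the level-stabilizer filtration:
`hdimIn m G X = liminf_n log|X : St_X(n)| / log|G : St_G(n)|`. -/
noncomputable def hdimIn (m : ℕ) (G X : Subgroup (Equiv.Perm (Vtx m))) : ℝ :=
  Filter.liminf (fun n : ℕ =>
    Real.log ((levelStab m n).relIndex X) / Real.log ((levelStab m n).relIndex G)) Filter.atTop

/-- `X` has strong Hausdorff dimension `α` in `G` if the sequence
`log|X : St_X(n)| / log|G : St_G(n)|` converges to `α` (a proper limit). -/
def hasStrongHdim (m : ℕ) (G X : Subgroup (Equiv.Perm (Vtx m))) (α : ℝ) : Prop :=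
  Filter.Tendsto (fun n : ℕ =>
    Real.log ((levelStab m n).relIndex X) / Real.log ((levelStab m n).relIndex G))
    Filter.atTop (nhds α)

/-- The closure of a subgroup of `Aut T` in the profinite (congruence) topology:
`cl(G) = ⋂_n G · St(n)`. -/
def treeClosure (m : ℕ) (G : Subgroup (Equiv.Perm (Vtx m))) : Subgroup (Equiv.Perm (Vtx m)) :=
  ⨅ n : ℕ, G ⊔ levelStab m n

/-- A subgroup of `Aut T` is closed (in the profinite topology) iff it equals its closure. -/
def IsTreeClosed (m : ℕ) (G : Subgroup (Equiv.Perm (Vtx m))) : Prop :=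
  treeClosure m G = G

/-- `G` acts transitively on every level of the tree. -/
def LevelTransitive (m : ℕ) (G : Subgroup (Equiv.Perm (Vtx m))) : Prop :=
  ∀ u v : Vtx m, u.length = v.length → ∃ g ∈ G, g u = v

/-- `G` is self-similar: the section of any `g ∈ G` at any vertex `v` again belongs to `G`,
i.e. there is `h ∈ G` with `g (v ++ u) = g v ++ h u` for all words `u`. -/
def SelfSimilar (m : ℕ) (G : Subgroup (Equiv.Perm (Vtx m))) : Prop :=
  ∀ g ∈ G, ∀ v : Vtx m, ∃ h ∈ G, ∀ u : Vtx m, g (v ++ u) = g v ++ h u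

/-- The rigid vertex stabilizer of `v` in `G`: elements of `G` fixing `v` and every vertex
outside the subtree rooted at `v`. -/
def rist (m : ℕ) (G : Subgroup (Equiv.Perm (Vtx m))) (v : Vtx m) :
    Subgroup (Equiv.Perm (Vtx m)) :=
  G ⊓ ⨅ u ∈ {u : Vtx m | u = v ∨ ¬ v <+: u}, MulAction.stabilizer (Equiv.Perm (Vtx m)) u

/-- The rigid level stabilizer `Rist_G(n)`: the (internal direct) product of the rigid
vertex stabilizers of the vertices at level `n`, i.e. the subgroup they generate. -/
def RistL (m : ℕ) (G : Subgroup (Equiv.Perm (Vtx m))) (n : ℕ) :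
    Subgroup (Equiv.Perm (Vtx m)) :=
  ⨆ v ∈ {v : Vtx m | v.length = n}, rist m G v

/-- `N` is a normal subgroup of `G` (both given as subgroups of an ambient group). -/
def NormalIn {X : Type*} [Group X] (N G : Subgroup X) : Prop :=
  N ≤ G ∧ ∀ g ∈ G, ∀ x ∈ N, g * x * g⁻¹ ∈ N

/-- The rooted automorphism associated to `σ`: it permutes the first letter by `σ` and is
trivial elsewhere. -/
def rootedPerm (m : ℕ) (σ : Equiv.Perm (Fin m)) : Equiv.Perm (Vtx m) where
  toFun v := match v with
    | [] => []
    | x :: w => σ x :: w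
  invFun v := match v with
    | [] => []
    | x :: w => σ⁻¹ x :: w
  left_inv v := by cases v with
    | nil => rfl
    | cons x w => simp
  right_inv v := by cases v with
    | nil => rfl
    | cons x w => simp

/-- The embedding `H → W_H` by rooted automorphisms, as a group homomorphism. -/
def rootedHom (m : ℕ) : Equiv.Perm (Fin m) →* Equiv.Perm (Vtx m) where
  toFun := rootedPerm m
  map_one' := by
    ext v
    cases v <;> rfl
  map_mul' σ τ := by
    ext v
    cases v <;> rfl

/-- `D_m(K)`: the preimage under the first-level section map `ψ` of the diagonal copy
`{(k,…,k) : k ∈ K}`, i.e. those `f` fixing the first level whose section at every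
first-level vertex is one and the same element `k ∈ K`. -/
def diagSub (m : ℕ) (K : Subgroup (Equiv.Perm (Vtx m))) : Subgroup (Equiv.Perm (Vtx m)) where
  carrier := {f | f [] = [] ∧ ∃ k ∈ K, ∀ (x : Fin m) (u : Vtx m), f (x :: u) = x :: k u}
  one_mem' := ⟨rfl, 1, K.one_mem, fun _ _ => rfl⟩
  mul_mem' := by
    rintro f g ⟨hf0, kf, hkf, hf⟩ ⟨hg0, kg, hkg, hg⟩
    refine ⟨?_, kf * kg, K.mul_mem hkf hkg, fun x u => ?_⟩
    · show f (g []) = []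
      rw [hg0, hf0]
    · show f (g (x :: u)) = x :: kf (kg u)
      rw [hg x u, hf x (kg u)]
  inv_mem' := by
    rintro f ⟨hf0, k, hk, hf⟩
    refine ⟨?_, k⁻¹, K.inv_mem hk, fun x u => ?_⟩
    · calc (f⁻¹ : Equiv.Perm (Vtx m)) [] = f⁻¹ (f []) := by rw [hf0]
        _ = [] := Equiv.symm_apply_apply f []
    · apply Equiv.injective f
      rw [hf x (k⁻¹ u)]
      simp only [Equiv.Perm.inv_def, Equiv.apply_symm_apply]

/-- The group `G_K = ⟨H, D_m(K)⟩`, where `H` acts by rooted automorphisms. -/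
def diagGroup (m : ℕ) (H : Subgroup (Equiv.Perm (Fin m))) (K : Subgroup (Equiv.Perm (Vtx m))) :
    Subgroup (Equiv.Perm (Vtx m)) :=
  H.map (rootedHom m) ⊔ diagSub m K

/-- The center of a subgroup `G` of an ambient group, as a subgroup of the ambient group. -/
def centerOf {X : Type*} [Group X] (G : Subgroup X) : Subgroup X :=
  Subgroup.centralizer (G : Set X) ⊓ G

/-- The `G`-orbit of a vertex `v`. -/
def orbitSet (m : ℕ) (G : Subgroup (Equiv.Perm (Vtx m))) (v : Vtx m) : Set (Vtx m) :=
  {w | ∃ g ∈ G, g v = w}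

/-- The number of `G`-orbits on the `n`-th level of the tree. -/
noncomputable def numOrbits (m : ℕ) (G : Subgroup (Equiv.Perm (Vtx m))) (n : ℕ) : ℕ :=
  Nat.card {s : Set (Vtx m) // ∃ v : Vtx m, v.length = n ∧ s = orbitSet m G v}

/-!
The rigid stabilizers `rist_G(v)` of the `m^k` vertices of level `k` act on disjoint subtrees, so
their product embeds in `Rist_G(k)` compatibly with restriction to the first `n` levels:
`|Rist_G(k) : St(n)| ≥ ∏_v |rist_G(v) : St(n)|`. Taking logarithms and using superadditivity of
`liminf`, `hdim_G(Rist_G(k)) ≥ ∑_v hdim_G(rist_G(v)) ≥ m^k · m^{-k} = 1`; the reverse inequality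
holds for every subgroup of `G`.
-/

open MulAction

theorem Filter.sum_liminf_le_liminf_sum {ι α : Type*} {l : Filter α} [l.NeBot]
    (s : Finset ι) {u : ι → α → ℝ} (hle : ∀ i ∈ s, l.IsBoundedUnder (· ≤ ·) (u i))
    (hge : ∀ i ∈ s, l.IsBoundedUnder (· ≥ ·) (u i)) :
    ∑ i ∈ s, liminf (u i) l ≤ liminf (∑ i ∈ s, u i) l := by
  induction s using Finset.cons_induction with
  | empty => simp [Pi.zero_def, liminf_const]
  | cons i s _ ih =>
    simp only [Finset.forall_mem_cons] at hle hge
    rw [Finset.sum_cons, Finset.sum_cons]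
    exact (add_le_add le_rfl (ih hle.2 hge.2)).trans <|
      le_liminf_add hge.1 hle.1 (isBoundedUnder_ge_sum s hge.2)
        (isBoundedUnder_le_sum s hle.2).isCoboundedUnder_ge

theorem Equiv.Perm.list_prod_map_apply_of_nodup {α ι : Type*} (S : ι → Set α)
    (g : ι → Equiv.Perm α) (hmaps : ∀ i, ∀ x ∈ S i, g i x ∈ S i)
    (hfix : ∀ i j, i ≠ j → ∀ x ∈ S j, g i x = x) {l : List ι} (hl : l.Nodup) {i : ι}
    (hi : i ∈ l) {x : α} (hx : x ∈ S i) : (l.map g).prod x = g i x := by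
  induction l with
  | nil => simp at hi
  | cons j t ih =>
    obtain ⟨hjt, ht⟩ := List.nodup_cons.mp hl
    rw [List.map_cons, List.prod_cons, Equiv.Perm.mul_apply]
    rcases List.mem_cons.mp hi with rfl | hit
    · have hstab : (t.map g).prod ∈ stabilizer (Equiv.Perm α) x := by
        refine (stabilizer (Equiv.Perm α) x).list_prod_mem fun h hh => ?_
        obtain ⟨j, hj, rfl⟩ := List.mem_map.mp hh
        exact hfix j i (fun hji => hjt (hji ▸ hj)) x hx
      exact congrArg (g i) (mem_stabilizer_iff.mp hstab)
    · rw [ih ht hit]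
      exact hfix j i (fun hji => hjt (hji ▸ hit)) _ (hmaps i x hx)

variable {m : ℕ}

theorem length_apply_of_mem_wreath {H : Subgroup (Equiv.Perm (Fin m))} {f : Equiv.Perm (Vtx m)}
    (hf : f ∈ wreath m H) (v : Vtx m) : (f v).length = v.length := by
  induction v using List.reverseRecOn with
  | nil => rw [hf.1]
  | append_singleton v x ih =>
    obtain ⟨σ, -, hσ⟩ := hf.2 v
    simp [hσ x, ih]

/-- `Aut T` acts on maps from the ball of radius `n` by post-composition; the stabilizer of the
inclusion is `St(n)`, so `|X : St_X(n)|` is the size of its `X`-orbit. -/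
def ballIncl (m n : ℕ) : {u : Vtx m // u.length ≤ n} → Vtx m := Subtype.val

theorem levelStab_eq_stabilizer (n : ℕ) :
    levelStab m n = stabilizer (Equiv.Perm (Vtx m)) (ballIncl m n) := by
  ext f
  simp [levelStab, Subgroup.mem_iInf, mem_stabilizer_iff, funext_iff, ballIncl,
    Equiv.Perm.smul_def]

theorem relIndex_levelStab_eq_ncard (n : ℕ) (X : Subgroup (Equiv.Perm (Vtx m))) :
    (levelStab m n).relIndex X = (orbit X (ballIncl m n)).ncard := by
  rw [← index_stabilizer, levelStab_eq_stabilizer, Subgroup.relIndex]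
  congr 1

theorem relIndex_levelStab_wreath_ne_zero (n : ℕ) (H : Subgroup (Equiv.Perm (Fin m))) :
    (levelStab m n).relIndex (wreath m H) ≠ 0 := by
  rw [relIndex_levelStab_eq_ncard]
  have : Finite {u : Vtx m // u.length ≤ n} := (List.finite_length_le (Fin m) n).to_subtype
  have hfin : (orbit (wreath m H) (ballIncl m n)).Finite := by
    refine (Set.Finite.pi' fun _ => List.finite_length_le (Fin m) n).subset ?_
    rintro _ ⟨f, rfl⟩ u
    simpa [Subgroup.smul_def, Equiv.Perm.smul_def, ballIncl,
      length_apply_of_mem_wreath f.2] using u.2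
  exact ((Set.ncard_pos hfin).mpr ⟨_, mem_orbit_self _⟩).ne'

theorem relIndex_levelStab_ne_zero {n : ℕ} {H : Subgroup (Equiv.Perm (Fin m))}
    {X : Subgroup (Equiv.Perm (Vtx m))} (hX : X ≤ wreath m H) :
    (levelStab m n).relIndex X ≠ 0 :=
  fun h => relIndex_levelStab_wreath_ne_zero n H (Subgroup.relIndex_eq_zero_of_le_right hX h)

noncomputable def hdimRatio (m : ℕ) (G X : Subgroup (Equiv.Perm (Vtx m))) (n : ℕ) : ℝ :=
  Real.log ((levelStab m n).relIndex X) / Real.log ((levelStab m n).relIndex G)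

theorem hdimIn_eq_liminf (G X : Subgroup (Equiv.Perm (Vtx m))) :
    hdimIn m G X = Filter.liminf (hdimRatio m G X) Filter.atTop := rfl

theorem hdimRatio_nonneg (G X : Subgroup (Equiv.Perm (Vtx m))) (n : ℕ) :
    0 ≤ hdimRatio m G X n :=
  div_nonneg (Real.log_natCast_nonneg _) (Real.log_natCast_nonneg _)

section
variable {H : Subgroup (Equiv.Perm (Fin m))} {G X : Subgroup (Equiv.Perm (Vtx m))}

theorem hdimRatio_le_one (hXG : X ≤ G) (hG : G ≤ wreath m H) (n : ℕ) :
    hdimRatio m G X n ≤ 1 := by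
  refine div_le_one_of_le₀ (Real.log_le_log ?_ ?_) (Real.log_natCast_nonneg _)
  · exact_mod_cast Nat.pos_of_ne_zero (relIndex_levelStab_ne_zero (hXG.trans hG))
  · exact_mod_cast Subgroup.relIndex_le_of_le_right hXG (relIndex_levelStab_ne_zero hG)

theorem hdimIn_le_one (hXG : X ≤ G) (hG : G ≤ wreath m H) : hdimIn m G X ≤ 1 :=
  Filter.liminf_le_of_frequently_le (.of_forall (hdimRatio_le_one hXG hG))
    (Filter.isBoundedUnder_of ⟨0, hdimRatio_nonneg G X⟩)

theorem sum_hdimRatio_le {ι : Type*} [Fintype ι] {X : ι → Subgroup (Equiv.Perm (Vtx m))}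
    {Y : Subgroup (Equiv.Perm (Vtx m))} (hX : ∀ i, X i ≤ G) (hG : G ≤ wreath m H) (n : ℕ)
    (hprod : ∏ i, (levelStab m n).relIndex (X i) ≤ (levelStab m n).relIndex Y) :
    ∑ i, hdimRatio m G (X i) n ≤ hdimRatio m G Y n := by
  have hpos : ∀ i, ((levelStab m n).relIndex (X i) : ℝ) ≠ 0 := fun i => by
    exact_mod_cast relIndex_levelStab_ne_zero ((hX i).trans hG)
  have hlog : ∑ i, Real.log ((levelStab m n).relIndex (X i)) ≤
      Real.log ((levelStab m n).relIndex Y) := by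
    rw [← Real.log_prod fun i _ => hpos i]
    refine Real.log_le_log ?_ (by exact_mod_cast hprod)
    exact Finset.prod_pos fun i _ => (Nat.cast_nonneg _).lt_of_ne' (hpos i)
  simp only [hdimRatio, ← Finset.sum_div]
  exact div_le_div_of_nonneg_right hlog (Real.log_natCast_nonneg _)

theorem sum_hdimIn_le_hdimIn {ι : Type*} [Fintype ι] {X : ι → Subgroup (Equiv.Perm (Vtx m))}
    {Y : Subgroup (Equiv.Perm (Vtx m))} (hX : ∀ i, X i ≤ G) (hYG : Y ≤ G)
    (hG : G ≤ wreath m H)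
    (hprod : ∀ n, ∏ i, (levelStab m n).relIndex (X i) ≤ (levelStab m n).relIndex Y) :
    ∑ i, hdimIn m G (X i) ≤ hdimIn m G Y := by
  have hbdd : ∀ Z ≤ G, Filter.atTop.IsBoundedUnder (· ≤ ·) (hdimRatio m G Z) :=
    fun Z hZ => Filter.isBoundedUnder_of ⟨1, hdimRatio_le_one hZ hG⟩
  have hbdd' : ∀ Z, Filter.atTop.IsBoundedUnder (· ≥ ·) (hdimRatio m G Z) :=
    fun Z => Filter.isBoundedUnder_of ⟨0, hdimRatio_nonneg G Z⟩
  calc ∑ i, hdimIn m G (X i)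
      ≤ Filter.liminf (∑ i, hdimRatio m G (X i)) Filter.atTop :=
        Filter.sum_liminf_le_liminf_sum _ (fun i _ => hbdd _ (hX i)) (fun i _ => hbdd' _)
    _ ≤ hdimIn m G Y := by
        rw [hdimIn_eq_liminf]
        refine Filter.liminf_le_liminf (.of_forall fun n => ?_)
          (Filter.isBoundedUnder_ge_sum _ fun i _ => hbdd' _) (hbdd Y hYG).isCoboundedUnder_ge
        simpa only [Finset.sum_apply] using sum_hdimRatio_le hX hG n (hprod n)

end

section
variable {G : Subgroup (Equiv.Perm (Vtx m))} {v u : Vtx m} {g : Equiv.Perm (Vtx m)}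

theorem apply_eq_self_of_mem_rist (hg : g ∈ rist m G v) (hu : ¬ v <+: u) : g u = u := by
  have := (Subgroup.mem_inf.mp hg).2
  simp only [Subgroup.mem_iInf, mem_stabilizer_iff, Equiv.Perm.smul_def] at this
  exact this u (Or.inr hu)

theorem prefix_apply_of_mem_rist (hg : g ∈ rist m G v) (hu : v <+: u) : v <+: g u := by
  by_contra hgu
  have := apply_eq_self_of_mem_rist ((rist m G v).inv_mem hg) hgu
  rw [Equiv.Perm.inv_def, Equiv.symm_apply_apply] at this
  exact hgu (this ▸ hu)

theorem rist_le_RistL {k : ℕ} (hv : v.length = k) : rist m G v ≤ RistL m G k :=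
  le_iSup₂ (f := fun w (_ : w ∈ {w : Vtx m | w.length = k}) => rist m G w) v hv

theorem RistL_le (k : ℕ) : RistL m G k ≤ G :=
  iSup₂_le fun _ _ => inf_le_left

theorem list_prod_apply_of_mem_rist {k : ℕ} {g : List.Vector (Fin m) k → Equiv.Perm (Vtx m)}
    (hg : ∀ w, g w ∈ rist m G w.toList) {l : List (List.Vector (Fin m) k)} (hl : l.Nodup)
    {v : List.Vector (Fin m) k} (hv : v ∈ l) (hu : v.toList <+: u) :
    (l.map g).prod u = g v u := by
  refine Equiv.Perm.list_prod_map_apply_of_nodup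
    (fun w : List.Vector (Fin m) k => {x | w.toList <+: x}) g
    (fun w x hx => prefix_apply_of_mem_rist (hg w) hx) (fun w w' hww' x hx => ?_) hl hv hu
  refine apply_eq_self_of_mem_rist (hg w) fun hwx => hww' (List.Vector.toList_injective ?_)
  exact (List.prefix_of_prefix_length_le hwx hx (by simp)).eq_of_length (by simp)

end

theorem prod_relIndex_rist_le_relIndex_RistL {H : Subgroup (Equiv.Perm (Fin m))}
    {G : Subgroup (Equiv.Perm (Vtx m))} (hG : G ≤ wreath m H) (k n : ℕ) :
    ∏ v : List.Vector (Fin m) k, (levelStab m n).relIndex (rist m G v.toList) ≤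
      (levelStab m n).relIndex (RistL m G k) := by
  have hfin : Finite (orbit (RistL m G k) (ballIncl m n)) := by
    refine (Set.finite_of_ncard_ne_zero ?_).to_subtype
    rw [← relIndex_levelStab_eq_ncard]
    exact relIndex_levelStab_ne_zero ((RistL_le k).trans hG)
  simp only [relIndex_levelStab_eq_ncard, ← Nat.card_coe_set_eq]
  rw [← Nat.card_pi]
  choose g hg using
    fun (φ : ∀ v : List.Vector (Fin m) k, orbit (rist m G v.toList) (ballIncl m n)) v => (φ v).2
  set P := fun φ => (Finset.univ.toList.map fun v => (g φ v : Equiv.Perm (Vtx m))).prod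
  have hP : ∀ φ, P φ ∈ RistL m G k := fun φ =>
    Subgroup.list_prod_mem _ fun _ hx => by
      obtain ⟨v, -, rfl⟩ := List.mem_map.mp hx
      exact rist_le_RistL v.toList_length (g φ v).2
  -- each `φ v` is recovered from `P φ` by restriction to the subtree below `v`
  have hrecover : ∀ φ v (u : {u : Vtx m // u.length ≤ n}),
      (φ v : {u : Vtx m // u.length ≤ n} → Vtx m) u =
        if v.toList <+: u.1 then (P φ • ballIncl m n) u else u.1 := fun φ v u => by
    rw [← hg φ v]
    split_ifs with hvu
    · exact (list_prod_apply_of_mem_rist (fun w => (g φ w).2) (Finset.nodup_toList _)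
        (Finset.mem_toList.mpr (Finset.mem_univ v)) hvu).symm
    · exact apply_eq_self_of_mem_rist (g φ v).2 hvu
  let F φ : orbit (RistL m G k) (ballIncl m n) := ⟨P φ • ballIncl m n, ⟨P φ, hP φ⟩, rfl⟩
  refine Nat.card_le_card_of_injective F fun φ ψ h =>
    funext fun v => Subtype.ext <| funext fun u => ?_
  have hPφψ : P φ • ballIncl m n = P ψ • ballIncl m n := congrArg Subtype.val h
  rw [hrecover φ, hrecover ψ, hPφψ]

theorem statement16_general (m : ℕ) (hm : 2 ≤ m) (H : Subgroup (Equiv.Perm (Fin m)))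
    (G : Subgroup (Equiv.Perm (Vtx m))) (hGW : G ≤ wreath m H)
    (hrist : ∀ v : Vtx m, ((m : ℝ) ^ v.length)⁻¹ ≤ hdimIn m G (rist m G v)) :
    ∀ k : ℕ, 1 ≤ k → hdimIn m G (RistL m G k) = 1 := by
  intro k _
  have hm0 : (m : ℝ) ≠ 0 := by exact_mod_cast (by omega : m ≠ 0)
  refine le_antisymm (hdimIn_le_one (RistL_le k) hGW) ?_
  calc (1 : ℝ) = ∑ _v : List.Vector (Fin m) k, ((m : ℝ) ^ k)⁻¹ := by
        simp [card_vector, hm0]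
    _ ≤ ∑ v : List.Vector (Fin m) k, hdimIn m G (rist m G v.toList) :=
        Finset.sum_le_sum fun v _ => by simpa using hrist v.toList
    _ ≤ hdimIn m G (RistL m G k) :=
        sum_hdimIn_le_hdimIn (fun _ => inf_le_left) (RistL_le k) hGW
          (prod_relIndex_rist_le_relIndex_RistL hGW k)

/-- Let `G ≤ W_H` be a closed subgroup such that
`hdim_G(rist_G(v)) ≥ m^{-l(v)}` for every vertex `v`.  Then every rigid level stabilizer
has Hausdorff dimension `1` in `G`: `hdim_G(Rist_G(k)) = 1` for every `k ≥ 1`. -/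
theorem statement16 (m : ℕ) (hm : 2 ≤ m) (H : Subgroup (Equiv.Perm (Fin m)))
    (G : Subgroup (Equiv.Perm (Vtx m))) (hGW : G ≤ wreath m H) (hGcl : IsTreeClosed m G)
    (hrist : ∀ v : Vtx m, ((m : ℝ) ^ v.length)⁻¹ ≤ hdimIn m G (rist m G v)) :
    ∀ k : ℕ, 1 ≤ k → hdimIn m G (RistL m G k) = 1 :=
  statement16_general m hm H G hGW hrist
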